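/- Let d ∈ (0, 1/2), A, B > 0, and R a natural number. Let f, g : ℝ → ℝ be integrable with support of f contained in [−A, A] and support of g contained in [−B, B], and suppose ∫_ℝ t^r f(t) dt = 0 for every natural number r < R. Then there exists a constant C > 0 such that for every real α with |α| ≥ 2(A + B), one has |∫_ℝ ∫_ℝ |t − s + α|^{2d−1} f(t) g(s) dt ds| ≤ C · |α|^{2d−1−R}. -/

import Mathlib

/-!
The kernel `t ↦ |t - s + α| ^ (2d - 1)` may be replaced by its difference with its Taylor
polynomial of degree `< R` on `[-A, A]`, since `f` annihilates such polynomials. For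
`|s| ≤ B` and `|α| ≥ 2(A + B)` the kernel stays at distance `≥ |α| / 2` from its singularity on
`[-A, A]`, so its `R`-th derivative is at most `|(2d-1)(2d-2)⋯(2d-R)| (|α| / 2) ^ (2d-1-R)`, and
the Taylor remainder bound gives the decay of the inner integral uniformly in `s`. Fubini then
integrates this bound against `|g|`.
-/

open MeasureTheory Set Polynomial

theorem MeasureTheory.Integrable.continuousOn_mul_of_support_subset {X : Type*}
    [TopologicalSpace X] [T2Space X] [MeasurableSpace X] [OpensMeasurableSpace X]
    {μ : Measure X} [IsFiniteMeasureOnCompacts μ] {K : Set X} {g f : X → ℝ}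
    (hK : IsCompact K) (hg : ContinuousOn g K) (hf : Integrable f μ)
    (hfs : Function.support f ⊆ K) : Integrable (fun x => g x * f x) μ :=
  (integrableOn_iff_integrable_of_support_subset
    ((Function.support_mul_subset_right g f).trans hfs)).mp
    (hf.integrableOn.continuousOn_mul hg hK)

theorem integral_eval_mul_eq_zero_of_moments {f : ℝ → ℝ} {K : Set ℝ} {R : ℕ} (hK : IsCompact K)
    (hf : Integrable f) (hfs : Function.support f ⊆ K)
    (hmf : ∀ r : ℕ, r < R → ∫ t : ℝ, t ^ r * f t = 0) {P : ℝ[X]} (hP : P ∈ degreeLT ℝ R) :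
    ∫ t, P.eval t * f t = 0 := by
  rcases eq_or_ne P 0 with rfl | hP0
  · simp
  have hPR : P.natDegree < R := (natDegree_lt_iff_degree_lt hP0).mpr (mem_degreeLT.mp hP)
  simp_rw [eval_eq_sum_range' hPR, Finset.sum_mul, mul_assoc]
  rw [integral_finsetSum _ fun i _ =>
    ((hf.continuousOn_mul_of_support_subset hK (continuous_pow i).continuousOn hfs).const_mul _)]
  refine Finset.sum_eq_zero fun i hi => ?_
  rw [integral_const_mul, hmf i (Finset.mem_range.mp hi), mul_zero]

noncomputable def taylorPolynomialWithin (F : ℝ → ℝ) (n : ℕ) (s : Set ℝ) (a : ℝ) : ℝ[X] :=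
  ∑ k ∈ Finset.range (n + 1), C (iteratedDerivWithin k F s a / k.factorial) * (X - C a) ^ k

theorem eval_taylorPolynomialWithin (F : ℝ → ℝ) (n : ℕ) (s : Set ℝ) (a t : ℝ) :
    (taylorPolynomialWithin F n s a).eval t = taylorWithinEval F n s a t := by
  simp only [taylorPolynomialWithin, taylor_within_apply, eval_finsetSum, eval_mul, eval_C,
    eval_pow, eval_sub, eval_X, smul_eq_mul]
  exact Finset.sum_congr rfl fun k _ => by ring

theorem taylorPolynomialWithin_mem_degreeLT (F : ℝ → ℝ) (n : ℕ) (s : Set ℝ) (a : ℝ) :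
    taylorPolynomialWithin F n s a ∈ degreeLT ℝ (n + 1) := by
  refine Submodule.sum_mem _ fun k hk => ?_
  rw [← smul_eq_C_mul]
  refine Submodule.smul_mem _ _ (mem_degreeLT.mpr ?_)
  rw [degree_pow, degree_X_sub_C, nsmul_one]
  exact_mod_cast Finset.mem_range.mp hk

theorem exists_mem_degreeLT_abs_sub_le {F : ℝ → ℝ} {a b M : ℝ} {R : ℕ} (hab : a ≤ b)
    (hF : ContDiffOn ℝ R F (Icc a b))
    (hFR : ∀ y ∈ Icc a b, |iteratedDerivWithin R F (Icc a b) y| ≤ M) :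
    ∃ P ∈ degreeLT ℝ R, ∀ t ∈ Icc a b, |F t - P.eval t| ≤ M * (b - a) ^ R := by
  cases R with
  | zero => exact ⟨0, zero_mem _, fun t ht => by simpa using hFR t ht⟩
  | succ n =>
    refine ⟨_, taylorPolynomialWithin_mem_degreeLT F n (Icc a b) a, fun t ht => ?_⟩
    have hM : 0 ≤ M := (abs_nonneg _).trans (hFR a (left_mem_Icc.mpr hab))
    have hta : 0 ≤ t - a := sub_nonneg.mpr ht.1
    rw [eval_taylorPolynomialWithin]
    calc |F t - taylorWithinEval F n (Icc a b) a t|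
        ≤ M * (t - a) ^ (n + 1) / n.factorial :=
          taylor_mean_remainder_bound hab (by exact_mod_cast hF) ht hFR
      _ ≤ M * (t - a) ^ (n + 1) := div_le_self (by positivity) (mod_cast n.factorial_pos)
      _ ≤ M * (b - a) ^ (n + 1) := by gcongr; exact ht.2

theorem abs_integral_mul_le_of_moments {F f : ℝ → ℝ} {a b M : ℝ} {R : ℕ} (hab : a ≤ b)
    (hF : ContDiffOn ℝ R F (Icc a b))
    (hFR : ∀ y ∈ Icc a b, |iteratedDerivWithin R F (Icc a b) y| ≤ M)
    (hf : Integrable f) (hfs : Function.support f ⊆ Icc a b)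
    (hmf : ∀ r : ℕ, r < R → ∫ t : ℝ, t ^ r * f t = 0) :
    |∫ t, F t * f t| ≤ M * (b - a) ^ R * ∫ t, |f t| := by
  obtain ⟨P, hP, hFP⟩ := exists_mem_degreeLT_abs_sub_le hab hF hFR
  have hPf : ∫ t, P.eval t * f t = 0 :=
    integral_eval_mul_eq_zero_of_moments isCompact_Icc hf hfs hmf hP
  have hint : ∀ {G : ℝ → ℝ}, ContinuousOn G (Icc a b) → Integrable fun t => G t * f t :=
    fun hG => hf.continuousOn_mul_of_support_subset isCompact_Icc hG hfs
  have hsub : ∫ t, F t * f t = ∫ t, (F t - P.eval t) * f t := by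
    simp_rw [sub_mul]
    rw [integral_sub (hint hF.continuousOn) (hint P.continuous.continuousOn), hPf, sub_zero]
  have hpt : ∀ t, |(F t - P.eval t) * f t| ≤ M * (b - a) ^ R * |f t| := fun t => by
    rw [abs_mul]
    by_cases ht : f t = 0
    · simp [ht]
    · exact mul_le_mul_of_nonneg_right (hFP t (hfs ht)) (abs_nonneg _)
  calc |∫ t, F t * f t| = |∫ t, (F t - P.eval t) * f t| := by rw [hsub]
    _ ≤ ∫ t, |(F t - P.eval t) * f t| := abs_integral_le_integral_abs
    _ ≤ ∫ t, M * (b - a) ^ R * |f t| :=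
        integral_mono_of_nonneg (ae_of_all _ fun _ => abs_nonneg _) (hf.abs.const_mul _)
          (ae_of_all _ hpt)
    _ = M * (b - a) ^ R * ∫ t, |f t| := integral_const_mul _ _

open Filter Topology in
theorem abs_iteratedDeriv_abs_rpow {p x : ℝ} (hx : x ≠ 0) (n : ℕ) :
    |iteratedDeriv n (fun y => |y| ^ p) x| = |(descPochhammer ℝ n).eval p| * |x| ^ (p - n) := by
  have hpow : ∀ y : ℝ, iteratedDeriv n (fun y : ℝ => y ^ p) y =
      (descPochhammer ℝ n).eval p * y ^ (p - n) := fun y => by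
    rw [iteratedDeriv_eq_iterate, Real.iter_deriv_rpow_const]
  rcases hx.lt_or_gt with hneg | hpos
  · have hloc : (fun y => |y| ^ p) =ᶠ[𝓝 x] fun y => (-y) ^ p := by
      filter_upwards [Iio_mem_nhds hneg] with y hy
      rw [abs_of_neg hy]
    rw [hloc.iteratedDeriv_eq, iteratedDeriv_comp_neg n (fun y => y ^ p), hpow, smul_eq_mul,
      abs_mul, abs_pow, abs_neg, abs_one, one_pow, one_mul, abs_mul,
      abs_of_nonneg (Real.rpow_nonneg (neg_nonneg.mpr hneg.le) _), abs_of_neg hneg]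
  · have hloc : (fun y => |y| ^ p) =ᶠ[𝓝 x] fun y => y ^ p := by
      filter_upwards [Ioi_mem_nhds hpos] with y hy
      rw [abs_of_pos hy]
    rw [hloc.iteratedDeriv_eq, hpow, abs_mul, abs_of_nonneg (Real.rpow_nonneg hpos.le _),
      abs_of_pos hpos]

theorem contDiffAt_abs_add_rpow {p c t : ℝ} {n : ℕ} (h : t + c ≠ 0) :
    ContDiffAt ℝ n (fun t => |t + c| ^ p) t :=
  (Real.contDiffAt_rpow_const_of_ne (abs_ne_zero.mpr h)).comp t
    ((contDiffAt_abs h).comp t (contDiffAt_id.add contDiffAt_const))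

theorem abs_integral_abs_add_rpow_mul_le {f : ℝ → ℝ} {p c a b m : ℝ} {R : ℕ} (hab : a < b)
    (hm : 0 < m) (hpR : p ≤ R) (hc : ∀ t ∈ Icc a b, m ≤ |t + c|)
    (hf : Integrable f) (hfs : Function.support f ⊆ Icc a b)
    (hmf : ∀ r : ℕ, r < R → ∫ t : ℝ, t ^ r * f t = 0) :
    |∫ t, |t + c| ^ p * f t| ≤
      |(descPochhammer ℝ R).eval p| * m ^ (p - R) * (b - a) ^ R * ∫ t, |f t| := by
  have hne : ∀ t ∈ Icc a b, t + c ≠ 0 := fun t ht => abs_pos.mp (hm.trans_le (hc t ht))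
  refine abs_integral_mul_le_of_moments hab.le
    (fun t ht => (contDiffAt_abs_add_rpow (hne t ht)).contDiffWithinAt) (fun t ht => ?_) hf hfs hmf
  rw [iteratedDerivWithin_eq_iteratedDeriv (uniqueDiffOn_Icc hab)
    (contDiffAt_abs_add_rpow (hne t ht)) ht, iteratedDeriv_comp_add_const R (fun y => |y| ^ p) c,
    abs_iteratedDeriv_abs_rpow (hne t ht)]
  exact mul_le_mul_of_nonneg_left
    (Real.rpow_le_rpow_of_nonpos hm (hc t ht) (sub_nonpos.mpr hpR)) (abs_nonneg _)

theorem abs_integral_integral_mul_le {K : ℝ → ℝ → ℝ} {f g : ℝ → ℝ} {C : ℝ}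
    (hK : Integrable (Function.uncurry fun t s => K t s * f t * g s) (volume.prod volume))
    (hg : Integrable g) (hC : ∀ s ∈ Function.support g, |∫ t, K t s * f t| ≤ C) :
    |∫ t, ∫ s, K t s * f t * g s| ≤ C * ∫ s, |g s| := by
  have hpt : ∀ s, |∫ t, K t s * f t * g s| ≤ C * |g s| := fun s => by
    rw [integral_mul_const, abs_mul]
    by_cases hs : g s = 0
    · simp [hs]
    · exact mul_le_mul_of_nonneg_right (hC s hs) (abs_nonneg _)
  calc |∫ t, ∫ s, K t s * f t * g s| = |∫ s, ∫ t, K t s * f t * g s| := by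
        rw [integral_integral_swap hK]
    _ ≤ ∫ s, |∫ t, K t s * f t * g s| := abs_integral_le_integral_abs
    _ ≤ ∫ s, C * |g s| :=
        integral_mono_of_nonneg (ae_of_all _ fun _ => abs_nonneg _) (hg.abs.const_mul _)
          (ae_of_all _ hpt)
    _ = C * ∫ s, |g s| := integral_const_mul _ _

theorem half_abs_le_abs_sub_add {A B α t s : ℝ} (hα : 2 * (A + B) ≤ |α|)
    (ht : t ∈ Icc (-A) A) (hs : s ∈ Icc (-B) B) : |α| / 2 ≤ |t - s + α| := by
  have hts : |s - t| ≤ A + B := abs_le.mpr ⟨by linarith [ht.2, hs.1], by linarith [ht.1, hs.2]⟩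
  have := abs_sub_abs_le_abs_sub α (s - t)
  rw [show α - (s - t) = t - s + α by ring] at this
  linarith

theorem integrable_abs_sub_add_rpow_mul_mul {f g : ℝ → ℝ} {A B α p : ℝ} (hA : 0 < A)
    (hα : 2 * (A + B) ≤ |α|) (hf : Integrable f) (hg : Integrable g)
    (hfs : Function.support f ⊆ Icc (-A) A) (hgs : Function.support g ⊆ Icc (-B) B) :
    Integrable (Function.uncurry fun t s => |t - s + α| ^ p * f t * g s) (volume.prod volume) := by
  have hK : ContinuousOn (fun z : ℝ × ℝ => |z.1 - z.2 + α| ^ p) (Icc (-A) A ×ˢ Icc (-B) B) := by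
    refine (by fun_prop : Continuous fun z : ℝ × ℝ => |z.1 - z.2 + α|).continuousOn.rpow_const
      fun z hz => Or.inl ?_
    have hB : 0 ≤ B := by linarith [hz.2.1, hz.2.2]
    exact (lt_of_lt_of_le (by linarith) (half_abs_le_abs_sub_add hα hz.1 hz.2)).ne'
  have hfgs : Function.support (fun z : ℝ × ℝ => f z.1 * g z.2) ⊆ Icc (-A) A ×ˢ Icc (-B) B :=
    fun z hz => ⟨hfs (left_ne_zero_of_mul hz), hgs (right_ne_zero_of_mul hz)⟩
  simpa only [Function.uncurry_def, mul_assoc] using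
    (hf.mul_prod hg).continuousOn_mul_of_support_subset (isCompact_Icc.prod isCompact_Icc) hK hfgs

/-- case 2 of Theorem 1, double-integral form: covariance decay
`O(|α|^{2d-1-R})` when one of the two functions has `R` vanishing moments. -/
theorem stmt_17 (d : ℝ) (hd : d ∈ Set.Ioo (0 : ℝ) (1 / 2)) (A B : ℝ)
    (hA : 0 < A) (hB : 0 < B) (R : ℕ)
    (f g : ℝ → ℝ) (hf : Integrable f) (hg : Integrable g)
    (hfs : Function.support f ⊆ Set.Icc (-A) A)
    (hgs : Function.support g ⊆ Set.Icc (-B) B)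
    (hmf : ∀ r : ℕ, r < R → ∫ t : ℝ, t ^ r * f t = 0) :
    ∃ C : ℝ, 0 < C ∧ ∀ α : ℝ, 2 * (A + B) ≤ |α| →
      |∫ t : ℝ, ∫ s : ℝ, |t - s + α| ^ (2 * d - 1) * f t * g s| ≤
        C * |α| ^ (2 * d - 1 - R) := by
  have hpR : 2 * d - 1 ≤ R := by linarith [hd.2, R.cast_nonneg (α := ℝ)]
  set C₀ := |(descPochhammer ℝ R).eval (2 * d - 1)| * (2 * A) ^ R * (∫ t, |f t|) *
    (∫ s, |g s|) / 2 ^ (2 * d - 1 - R)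
  have hC₀ : 0 ≤ C₀ := by positivity
  refine ⟨C₀ + 1, by positivity, fun α hα => ?_⟩
  have hinner : ∀ s ∈ Function.support g, |∫ t, |t - s + α| ^ (2 * d - 1) * f t| ≤
      |(descPochhammer ℝ R).eval (2 * d - 1)| * (|α| / 2) ^ (2 * d - 1 - R) * (2 * A) ^ R *
        ∫ t, |f t| := fun s hs => by
    have hshift : ∀ t, t - s + α = t + (α - s) := fun t => by ring
    have hbound := abs_integral_abs_add_rpow_mul_le (c := α - s) (neg_lt_self hA)
      (half_pos (by linarith)) hpR
      (fun t ht => hshift t ▸ half_abs_le_abs_sub_add hα ht (hgs hs)) hf hfs hmf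
    simp_rw [hshift]
    rwa [sub_neg_eq_add, ← two_mul] at hbound
  calc |∫ t, ∫ s, |t - s + α| ^ (2 * d - 1) * f t * g s|
      ≤ |(descPochhammer ℝ R).eval (2 * d - 1)| * (|α| / 2) ^ (2 * d - 1 - R) * (2 * A) ^ R *
          (∫ t, |f t|) * ∫ s, |g s| :=
        abs_integral_integral_mul_le
          (integrable_abs_sub_add_rpow_mul_mul hA hα hf hg hfs hgs) hg hinner
    _ = C₀ * |α| ^ (2 * d - 1 - R) := by
        rw [Real.div_rpow (abs_nonneg α) zero_le_two]
        ring
    _ ≤ (C₀ + 1) * |α| ^ (2 * d - 1 - R) := by gcongr; linarith
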